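/- For every positive real number c there exists a control pair (λ, k) such that the following holds. Let ℰ be a coarse structure, A a unital ℰ-filtered C*-algebra, E ∈ ℰ, and (Δ₁, Δ₂, A_{Δ₁}, A_{Δ₂}) an E-controlled Mayer-Vietoris pair for A with coercivity c. Let E' ∈ ℰ with E' + E' ≤ E, let ε ∈ (0, 1/(4λ³)), let n and m be positive integers, let u be an ε-E'-unitary in M_n(A), let v be an ε-E'-unitary in M_m(A), and let w₁, w₂ be ε-E'-unitaries in M_{n+m}(A) such that wᵢ − I_{n+m} has all entries in A_{Δᵢ} for i = 1, 2 and ‖diag(u, v) − w₁w₂‖ < ε. Then there exists a λε-(k_ε E')-projection q in M_{n+m}(A) such that: (i) q − diag(I_n, 0) has all entries in A_{Δ₁} ∩ A_{Δ₂}; (ii) ‖q − w₁* diag(I_n, 0) w₁‖ < λε; and (iii) ‖q − w₂ diag(I_n, 0) w₂*‖ < λε. -/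

import Mathlib

/-!
With `P = diag(I_n, 0)`, the two approximate projections `w₁* P w₁` and `w₂ P w₂*` are
`104ε`-close: `P` commutes with `diag(u, v) ≈ w₁ w₂`, so conjugating `P` by `w₁ w₂` and undoing
`w₁` moves it only by `O(ε)`. Their differences with `P` have entries in `B₁` resp. `B₂`
and propagation `3E'`, so the CIA property yields a self-adjoint `z` in both,
`105cε`-close to each, and `q = P + z` is the required projection; `q² - q` is estimated in
the C⋆-algebra `CStarMatrix`, whose norm is `matCNorm`.
-/


universe u v

/-- The (unique) C*-norm of a square matrix over a C*-algebra `A`: the operator norm of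
the matrix acting on the Hilbert `A`-module `Aⁿ`. -/
noncomputable def matCNorm {A : Type*} [CStarAlgebra A] {n : ℕ}
    (x : Matrix (Fin n) (Fin n) A) : ℝ :=
  sSup {t : ℝ | ∃ v : Fin n → A, ‖∑ j, star (v j) * v j‖ ≤ 1 ∧
    t = Real.sqrt ‖∑ j, star (x.mulVec v j) * x.mulVec v j‖}

/-- An `ℰ`-filtered (unital) C*-algebra structure on `A`: a family of closed linear
subspaces `F E`, monotone in `E`, stable under the involution, satisfying
`F E * F E' ⊆ F (E + E')`, with dense union, and with `1 ∈ F E` for all `E`. -/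
structure CoarseFiltration (ℰ : Type*) [AddCommSemigroup ℰ] [Lattice ℰ]
    (A : Type*) [CStarAlgebra A] where
  F : ℰ → Submodule ℂ A
  closed : ∀ E, IsClosed (F E : Set A)
  mono : ∀ ⦃E E' : ℰ⦄, E ≤ E' → F E ≤ F E'
  star_mem : ∀ E : ℰ, ∀ a ∈ F E, star a ∈ F E
  mul_mem : ∀ E E' : ℰ, ∀ a b : A, a ∈ F E → b ∈ F E' → a * b ∈ F (E + E')
  dense_union : Dense (⋃ E : ℰ, (F E : Set A))
  one_mem : ∀ E : ℰ, (1 : A) ∈ F E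

/-- `posSMul m E` is the `m`-fold sum `E + ⋯ + E` (only used for `m ≥ 1`). -/
def posSMul {ℰ : Type*} [AddCommSemigroup ℰ] : ℕ → ℰ → ℰ
  | 0, E => E
  | 1, E => E
  | (n + 2), E => posSMul (n + 1) E + E

/-- An `ε`-`E`-unitary in a matrix algebra over a filtered C*-algebra: all entries have
propagation `E`, and `‖w*w − 1‖ < ε`, `‖ww* − 1‖ < ε` for the C*-norm. -/
def IsQUnitary {ℰ : Type*} [AddCommSemigroup ℰ] [Lattice ℰ]
    {A : Type*} [CStarAlgebra A] (Φ : CoarseFiltration ℰ A) (ε : ℝ) (E : ℰ)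
    {n : ℕ} (w : Matrix (Fin n) (Fin n) A) : Prop :=
  (∀ i j, w i j ∈ Φ.F E) ∧
    matCNorm (star w * w - 1) < ε ∧ matCNorm (w * star w - 1) < ε

/-- An `E`-controlled Mayer-Vietoris pair `(Δ₁, Δ₂, B₁, B₂)` for a filtered C*-algebra
`A` with coercivity `c`: a completely coercive decomposition pair `(Δ₁, Δ₂)` of order `E`
with coercivity `c`, `E`-controlled `Δᵢ`-neighborhood C*-subalgebras `Bᵢ`, and the CIA
property with coercivity `c` for `(B₁ ∩ A_{E'}, B₂ ∩ A_{E'})` for every `E'`. -/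
structure MVPair {ℰ : Type*} [AddCommSemigroup ℰ] [Lattice ℰ]
    {A : Type*} [CStarAlgebra A] (Φ : CoarseFiltration ℰ A) (E : ℰ) (c : ℝ) where
  Δ₁ : Submodule ℂ A
  Δ₂ : Submodule ℂ A
  closedΔ₁ : IsClosed (Δ₁ : Set A)
  closedΔ₂ : IsClosed (Δ₂ : Set A)
  Δ₁_le : Δ₁ ≤ Φ.F E
  Δ₂_le : Δ₂ ≤ Φ.F E
  decomp : ∀ E' : ℰ, E' ≤ E → ∀ n : ℕ, ∀ x : Matrix (Fin n) (Fin n) A,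
    (∀ i j, x i j ∈ Φ.F E') →
    ∃ x₁ x₂ : Matrix (Fin n) (Fin n) A,
      (∀ i j, x₁ i j ∈ Δ₁ ∧ x₁ i j ∈ Φ.F E') ∧
      (∀ i j, x₂ i j ∈ Δ₂ ∧ x₂ i j ∈ Φ.F E') ∧
      matCNorm x₁ ≤ c * matCNorm x ∧ matCNorm x₂ ≤ c * matCNorm x ∧ x = x₁ + x₂
  B₁ : NonUnitalStarSubalgebra ℂ A
  B₂ : NonUnitalStarSubalgebra ℂ A
  closedB₁ : IsClosed (B₁ : Set A)
  closedB₂ : IsClosed (B₂ : Set A)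
  denseB₁ : (B₁ : Set A) ⊆ closure (⋃ E' : ℰ, ((B₁ : Set A) ∩ (Φ.F E' : Set A)))
  denseB₂ : (B₂ : Set A) ⊆ closure (⋃ E' : ℰ, ((B₂ : Set A) ∩ (Φ.F E' : Set A)))
  nbhd₁ : ∀ d₁ d₂ d₃ d₄ : A, d₁ ∈ Δ₁ → d₂ ∈ Δ₁ → d₃ ∈ Δ₁ → d₄ ∈ Δ₁ →
    ∀ a b a' b' : A, a ∈ Φ.F (E + E + E + E + E) → b ∈ Φ.F (E + E + E + E + E) →
      a' ∈ Φ.F (E + E + E + E + E) → b' ∈ Φ.F (E + E + E + E + E) →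
      d₁ + a * d₂ + d₃ * b + a' * d₄ * b' ∈ B₁
  nbhd₂ : ∀ d₁ d₂ d₃ d₄ : A, d₁ ∈ Δ₂ → d₂ ∈ Δ₂ → d₃ ∈ Δ₂ → d₄ ∈ Δ₂ →
    ∀ a b a' b' : A, a ∈ Φ.F (E + E + E + E + E) → b ∈ Φ.F (E + E + E + E + E) →
      a' ∈ Φ.F (E + E + E + E + E) → b' ∈ Φ.F (E + E + E + E + E) →
      d₁ + a * d₂ + d₃ * b + a' * d₄ * b' ∈ B₂
  cia : ∀ E' : ℰ, ∀ δ : ℝ, 0 < δ → ∀ n : ℕ, ∀ x y : Matrix (Fin n) (Fin n) A,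
    (∀ i j, x i j ∈ B₁ ∧ x i j ∈ Φ.F E') →
    (∀ i j, y i j ∈ B₂ ∧ y i j ∈ Φ.F E') →
    matCNorm (x - y) < δ →
    ∃ z : Matrix (Fin n) (Fin n) A,
      (∀ i j, z i j ∈ B₁ ∧ z i j ∈ B₂ ∧ z i j ∈ Φ.F E') ∧
      matCNorm (z - x) < c * δ ∧ matCNorm (z - y) < c * δ


/-- An `ε`-`E`-projection in a matrix algebra over a filtered C*-algebra: all entries
have propagation `E`, `p* = p` and `‖p² − p‖ < ε` for the C*-norm. -/
def IsQProjection {ℰ : Type*} [AddCommSemigroup ℰ] [Lattice ℰ]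
    {A : Type*} [CStarAlgebra A] (Φ : CoarseFiltration ℰ A) (ε : ℝ) (E : ℰ)
    {n : ℕ} (p : Matrix (Fin n) (Fin n) A) : Prop :=
  (∀ i j, p i j ∈ Φ.F E) ∧ star p = p ∧ matCNorm (p * p - p) < ε

/-- The block-diagonal matrix `diag(u, v)`. -/
def dsum {A : Type*} [Zero A] {n m : ℕ} (u : Matrix (Fin n) (Fin n) A)
    (v : Matrix (Fin m) (Fin m) A) : Matrix (Fin (n + m)) (Fin (n + m)) A :=
  Matrix.reindex finSumFinEquiv finSumFinEquiv (Matrix.fromBlocks u 0 0 v)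

/-- The diagonal matrix `diag(I_n, 0)` of size `N`. -/
def diagOne (A : Type*) [Zero A] [One A] (n N : ℕ) : Matrix (Fin N) (Fin N) A :=
  Matrix.diagonal fun i => if (i : ℕ) < n then 1 else 0

section ApproxUnitary

variable {R : Type*} [NormedRing R] [StarRing R] [CStarRing R] {a b d p q : R} {ε δ : ℝ}

lemma CStarRing.norm_one_le : ‖(1 : R)‖ ≤ 1 := IsStarProjection.norm_le _ (IsStarProjection.one R)

lemma norm_le_two_of_norm_star_mul_self_sub_one_le (h : ‖star a * a - 1‖ ≤ 1) : ‖a‖ ≤ 2 := by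
  have : ‖a‖ * ‖a‖ ≤ 2 := calc
    ‖a‖ * ‖a‖ = ‖star a * a‖ := CStarRing.norm_star_mul_self.symm
    _ = ‖(star a * a - 1) + 1‖ := by rw [sub_add_cancel]
    _ ≤ 1 + 1 := (norm_add_le _ _).trans (add_le_add h CStarRing.norm_one_le)
    _ = 2 := by norm_num
  nlinarith [norm_nonneg a]

lemma norm_le_two_of_norm_mul_star_self_sub_one_le (h : ‖a * star a - 1‖ ≤ 1) : ‖a‖ ≤ 2 := by
  rw [← norm_star a]
  exact norm_le_two_of_norm_star_mul_self_sub_one_le (by rwa [star_star])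

lemma norm_mul_mul_star_sub_mul_mul_star_le (x y p : R) :
    ‖x * p * star x - y * p * star y‖ ≤ ‖x - y‖ * ‖p‖ * (‖x‖ + ‖y‖) := by
  have key : x * p * star x - y * p * star y = (x - y) * p * star x + y * p * star (x - y) := by
    rw [star_sub]; noncomm_ring
  calc ‖x * p * star x - y * p * star y‖
      ≤ ‖x - y‖ * ‖p‖ * ‖star x‖ + ‖y‖ * ‖p‖ * ‖star (x - y)‖ := by
        rw [key]; exact (norm_add_le _ _).trans (add_le_add norm_mul₃_le norm_mul₃_le)
    _ = ‖x - y‖ * ‖p‖ * (‖x‖ + ‖y‖) := by rw [norm_star, norm_star]; ring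

lemma norm_mul_star_sub_one_le_of_norm_sub_mul_le (hε : ε ≤ 1)
    (ha : ‖a * star a - 1‖ ≤ ε) (hb : ‖b * star b - 1‖ ≤ ε) (hd : ‖d - a * b‖ ≤ ε) :
    ‖d * star d - 1‖ ≤ 14 * ε := by
  have hε₀ : 0 ≤ ε := (norm_nonneg _).trans ha
  have ha₂ := norm_le_two_of_norm_mul_star_self_sub_one_le (ha.trans hε)
  have hb₂ := norm_le_two_of_norm_mul_star_self_sub_one_le (hb.trans hε)
  have hab : ‖a * b‖ ≤ 4 := (norm_mul_le a b).trans (by nlinarith [norm_nonneg a, norm_nonneg b])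
  have hd₅ : ‖d‖ ≤ 5 := by linarith [norm_le_norm_add_norm_sub' d (a * b)]
  have h₁ : ‖d * 1 * star d - a * b * 1 * star (a * b)‖ ≤ ε * 9 := by
    calc _ ≤ ‖d - a * b‖ * ‖(1 : R)‖ * (‖d‖ + ‖a * b‖) :=
          norm_mul_mul_star_sub_mul_mul_star_le _ _ _
      _ ≤ ε * 1 * (5 + 4) := by have := CStarRing.norm_one_le (R := R); gcongr
      _ = ε * 9 := by ring
  have h₂ : ‖a * (b * star b - 1) * star a‖ ≤ 2 * ε * 2 := by
    refine norm_mul₃_le.trans ?_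
    rw [norm_star]
    gcongr
  have key : d * star d - 1 = (d * 1 * star d - a * b * 1 * star (a * b))
      + a * (b * star b - 1) * star a + (a * star a - 1) := by
    rw [star_mul]; noncomm_ring
  rw [key]
  linarith [norm_add₃_le (a := d * 1 * star d - a * b * 1 * star (a * b))
    (b := a * (b * star b - 1) * star a) (c := a * star a - 1)]

lemma norm_star_mul_mul_sub_mul_mul_star_le (hε : ε ≤ 1) (hp : IsStarProjection p)
    (hpd : Commute p d) (ha₁ : ‖star a * a - 1‖ ≤ ε) (ha₂ : ‖a * star a - 1‖ ≤ ε)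
    (hb : ‖b * star b - 1‖ ≤ ε) (hd : ‖d - a * b‖ ≤ ε) :
    ‖star a * p * a - b * p * star b‖ ≤ 104 * ε := by
  have hε₀ : 0 ≤ ε := (norm_nonneg _).trans ha₁
  have ha := norm_le_two_of_norm_star_mul_self_sub_one_le (ha₁.trans hε)
  have hb₂ := norm_le_two_of_norm_mul_star_self_sub_one_le (hb.trans hε)
  have hp₁ := hp.norm_le
  have hab : ‖a * b‖ ≤ 4 := (norm_mul_le a b).trans (by nlinarith [norm_nonneg a, norm_nonneg b])
  have hd₅ : ‖d‖ ≤ 5 := by linarith [norm_le_norm_add_norm_sub' d (a * b)]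
  have hbpb : ‖b * p * star b‖ ≤ 4 := norm_mul₃_le.trans (by
    rw [norm_star]; nlinarith [norm_nonneg b, mul_nonneg (norm_nonneg b) (norm_nonneg p)])
  have haa : ‖star a * a‖ ≤ 2 := by
    linarith [norm_le_norm_add_norm_sub' (star a * a) 1, CStarRing.norm_one_le (R := R)]
  -- `a* p a ≈ a* p (d d*) a = a* d p d* a ≈ a* (ab) p (ab)* a = (a* a) (b p b*) (a* a) ≈ b p b*`
  have key : star a * p * a - b * p * star b =
      -(star a * (p * (d * star d - 1)) * a)
      + star a * (d * p * star d - a * b * p * star (a * b)) * a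
      + (star a * a * (b * p * star b) * star (star a * a) - 1 * (b * p * star b) * star 1) := by
    simp only [star_mul, star_star, star_one]
    rw [← hpd.eq]
    noncomm_ring
  have h₁ : ‖star a * (p * (d * star d - 1)) * a‖ ≤ 2 * (1 * (14 * ε)) * 2 := by
    refine norm_mul₃_le.trans ?_
    rw [norm_star]
    have := norm_mul_star_sub_one_le_of_norm_sub_mul_le hε ha₂ hb hd
    gcongr
    exact norm_mul_le_of_le hp₁ this
  have h₂ : ‖star a * (d * p * star d - a * b * p * star (a * b)) * a‖
      ≤ 2 * (ε * 1 * (5 + 4)) * 2 := by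
    refine norm_mul₃_le.trans ?_
    rw [norm_star]
    gcongr
    exact (norm_mul_mul_star_sub_mul_mul_star_le _ _ _).trans (by gcongr)
  have h₃ : ‖star a * a * (b * p * star b) * star (star a * a) - 1 * (b * p * star b) * star 1‖
      ≤ ε * 4 * (2 + 1) :=
    (norm_mul_mul_star_sub_mul_mul_star_le _ _ _).trans (by gcongr; exact CStarRing.norm_one_le)
  rw [key]
  have := norm_add₃_le (a := -(star a * (p * (d * star d - 1)) * a))
    (b := star a * (d * p * star d - a * b * p * star (a * b)) * a)
    (c := star a * a * (b * p * star b) * star (star a * a) - 1 * (b * p * star b) * star 1)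
  rw [norm_neg] at this
  linarith

lemma norm_mul_self_sub_self_le (hε : ε ≤ 1) (hδ : δ ≤ 1) (hp : IsStarProjection p)
    (ha : ‖a * star a - 1‖ ≤ ε) (hq : ‖q - star a * p * a‖ ≤ δ) :
    ‖q * q - q‖ ≤ 10 * δ + 4 * ε := by
  set e := star a * p * a
  have hε₀ : 0 ≤ ε := (norm_nonneg _).trans ha
  have hδ₀ : 0 ≤ δ := (norm_nonneg _).trans hq
  have ha₂ := norm_le_two_of_norm_mul_star_self_sub_one_le (ha.trans hε)
  have hp₁ := hp.norm_le
  have he : ‖e‖ ≤ 4 := norm_mul₃_le.trans (by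
    rw [norm_star]; nlinarith [norm_nonneg a, mul_nonneg (norm_nonneg a) (norm_nonneg p)])
  have hq₅ : ‖q‖ ≤ 5 := by linarith [norm_le_norm_add_norm_sub' q e]
  have hee : ‖e * e - e‖ ≤ 2 * 1 * ε * 1 * 2 := by
    have : star a * p * (a * star a - 1) * p * a = e * e - star a * (p * p) * a := by
      simp only [e]; noncomm_ring
    rw [hp.isIdempotentElem.eq] at this
    rw [← this]
    refine (norm_mul_le _ _).trans ?_
    gcongr
    refine (norm_mul_le _ _).trans ?_
    gcongr
    exact norm_mul₃_le.trans (by rw [norm_star]; gcongr)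
  have key : q * q - q = (q - e) * q + e * (q - e) + (e * e - e) - (q - e) := by noncomm_ring
  have h₁ : ‖(q - e) * q‖ ≤ δ * 5 := norm_mul_le_of_le hq hq₅
  have h₂ : ‖e * (q - e)‖ ≤ 4 * δ := norm_mul_le_of_le he hq
  rw [key]
  linarith [norm_sub_le ((q - e) * q + e * (q - e) + (e * e - e)) (q - e),
    norm_add₃_le (a := (q - e) * q) (b := e * (q - e)) (c := e * e - e)]

end ApproxUnitary

lemma norm_half_add_star_sub_le {E : Type*} [NormedAddCommGroup E] [StarAddMonoid E]
    [NormedStarGroup E] [NormedSpace ℂ E] {z x : E} (hx : star x = x) :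
    ‖(2⁻¹ : ℂ) • (z + star z) - x‖ ≤ ‖z - x‖ := by
  have : (2⁻¹ : ℂ) • (z + star z) - x = (2⁻¹ : ℂ) • ((z - x) + star (z - x)) := by
    rw [star_sub, hx]; module
  calc ‖(2⁻¹ : ℂ) • (z + star z) - x‖ = 2⁻¹ * ‖z - x + star (z - x)‖ := by
        rw [this, norm_smul]; norm_num
    _ ≤ 2⁻¹ * (‖z - x‖ + ‖star (z - x)‖) := by gcongr; exact norm_add_le _ _
    _ = ‖z - x‖ := by rw [norm_star]; ring

section MatCNorm

variable {A : Type*} [CStarAlgebra A] {N : ℕ}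

lemma CStarMatrix.toCLM_star_ofMatrix_equiv_symm_star (x : Matrix (Fin N) (Fin N) A)
    (v : Fin N → A) :
    toCLM (star (ofMatrix x)) ((WithCStarModule.equiv A (Fin N → A)).symm (star v))
      = (WithCStarModule.equiv A (Fin N → A)).symm (star (x.mulVec v)) := by
  rw [toCLM_apply, Matrix.star_mulVec]
  rfl

lemma norm_equiv_symm_star [PartialOrder A] [StarOrderedRing A] (v : Fin N → A) :
    ‖(WithCStarModule.equiv A (Fin N → A)).symm (star v)‖ = √‖∑ j, star (v j) * v j‖ := by
  rw [CStarModule.norm_eq_sqrt_norm_inner_self (A := A)]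
  simp [WithCStarModule.pi_inner, WithCStarModule.inner_def]

/-- `CStarMatrix` acts on the left Hilbert module of row vectors, `matCNorm` on column vectors;
`v ↦ star v` exchanges the two, turning `x` into `star x`, which has the same C⋆-norm. -/
theorem matCNorm_eq_norm [PartialOrder A] [StarOrderedRing A] (x : Matrix (Fin N) (Fin N) A) :
    matCNorm x = ‖CStarMatrix.ofMatrixStarAlgEquiv x‖ := by
  rw [← norm_star, CStarMatrix.norm_def, ← ContinuousLinearMap.sSup_unitClosedBall_eq_norm,
    matCNorm]
  congr 1
  ext t
  simp only [Set.mem_image, Metric.mem_closedBall, dist_zero_right]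
  constructor
  · rintro ⟨v, hv, rfl⟩
    refine ⟨(WithCStarModule.equiv A _).symm (star v), ?_, ?_⟩
    · rwa [norm_equiv_symm_star, Real.sqrt_le_one]
    · rw [← CStarMatrix.ofMatrix_eq_ofMatrixStarAlgEquiv,
        CStarMatrix.toCLM_star_ofMatrix_equiv_symm_star, norm_equiv_symm_star]
  · rintro ⟨w, hw, rfl⟩
    obtain ⟨v, rfl⟩ : ∃ v, (WithCStarModule.equiv A _).symm (star v) = w :=
      ⟨star (WithCStarModule.equiv A _ w), by simp⟩
    refine ⟨v, ?_, ?_⟩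
    · rwa [norm_equiv_symm_star, Real.sqrt_le_one] at hw
    · rw [← CStarMatrix.ofMatrix_eq_ofMatrixStarAlgEquiv,
        CStarMatrix.toCLM_star_ofMatrix_equiv_symm_star, norm_equiv_symm_star]

variable {ε δ : ℝ}

lemma matCNorm_half_add_star_sub_le {x z : Matrix (Fin N) (Fin N) A} (hx : star x = x) :
    matCNorm ((2⁻¹ : ℂ) • (z + star z) - x) ≤ matCNorm (z - x) := by
  let : PartialOrder A := CStarAlgebra.spectralOrder A
  let : StarOrderedRing A := CStarAlgebra.spectralOrderedRing A
  simp only [matCNorm_eq_norm, map_sub, map_smul, map_add, map_star]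
  exact norm_half_add_star_sub_le (by rw [← map_star, hx])

lemma matCNorm_star_mul_mul_sub_mul_mul_star_le {p d a b : Matrix (Fin N) (Fin N) A}
    (hε : ε ≤ 1) (hp : IsStarProjection p) (hpd : Commute p d)
    (ha₁ : matCNorm (star a * a - 1) < ε) (ha₂ : matCNorm (a * star a - 1) < ε)
    (hb : matCNorm (b * star b - 1) < ε) (hd : matCNorm (d - a * b) < ε) :
    matCNorm (star a * p * a - b * p * star b) ≤ 104 * ε := by
  let : PartialOrder A := CStarAlgebra.spectralOrder A
  let : StarOrderedRing A := CStarAlgebra.spectralOrderedRing A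
  let ι := CStarMatrix.ofMatrixStarAlgEquiv (n := Fin N) (A := A)
  simp only [matCNorm_eq_norm, map_sub, map_mul, map_star, map_one] at *
  exact norm_star_mul_mul_sub_mul_mul_star_le hε (hp.map ι) (hpd.map ι) ha₁.le ha₂.le hb.le hd.le

lemma matCNorm_mul_self_sub_self_le {p a q : Matrix (Fin N) (Fin N) A} (hε : ε ≤ 1) (hδ : δ ≤ 1)
    (hp : IsStarProjection p) (ha : matCNorm (a * star a - 1) ≤ ε)
    (hq : matCNorm (q - star a * p * a) ≤ δ) :
    matCNorm (q * q - q) ≤ 10 * δ + 4 * ε := by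
  let : PartialOrder A := CStarAlgebra.spectralOrder A
  let : StarOrderedRing A := CStarAlgebra.spectralOrderedRing A
  let ι := CStarMatrix.ofMatrixStarAlgEquiv (n := Fin N) (A := A)
  simp only [matCNorm_eq_norm, map_sub, map_mul, map_star, map_one] at *
  exact norm_mul_self_sub_self_le hε hδ (hp.map ι) ha hq

end MatCNorm

section DiagOne

variable {A : Type*} [CStarAlgebra A] {n m N : ℕ}

lemma diagOne_isStarProjection : IsStarProjection (diagOne A n N) := by
  refine ⟨?_, ?_⟩
  · rw [IsIdempotentElem, diagOne, Matrix.diagonal_mul_diagonal]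
    congr 1; funext i; split_ifs <;> simp
  · rw [IsSelfAdjoint, diagOne, Matrix.star_eq_conjTranspose, Matrix.diagonal_conjTranspose]
    congr 1; funext i; split_ifs <;> simp [*]

lemma diagOne_eq_dsum : diagOne A n (n + m) = dsum (1 : Matrix (Fin n) (Fin n) A) 0 := by
  ext i j
  induction i using Fin.addCases <;> induction j using Fin.addCases <;>
    simp [diagOne, dsum, Matrix.diagonal_apply, Matrix.one_apply, Fin.ext_iff]
  omega

lemma diagOne_commute_dsum (u : Matrix (Fin n) (Fin n) A) (v : Matrix (Fin m) (Fin m) A) :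
    Commute (diagOne A n (n + m)) (dsum u v) := by
  have : Commute (Matrix.fromBlocks 1 0 0 0) (Matrix.fromBlocks u 0 0 v) := by
    simp [Commute, SemiconjBy, Matrix.fromBlocks_multiply]
  rw [diagOne_eq_dsum]
  exact this.map (Matrix.reindexRingEquiv A finSumFinEquiv)

end DiagOne

section Entries

variable {A : Type*} [CStarAlgebra A] {n N : ℕ}

lemma star_entries_mem {S : Type*} [SetLike S A] {s : S} (hs : ∀ a ∈ s, star a ∈ s)
    {x : Matrix (Fin N) (Fin N) A} (hx : ∀ i j, x i j ∈ s) : ∀ i j, (star x) i j ∈ s :=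
  fun i j => by rw [Matrix.star_apply]; exact hs _ (hx j i)

lemma half_add_star_entries_mem {S : Type*} [SetLike S A] [AddSubmonoidClass S A]
    [SMulMemClass S ℂ A] {s : S} (hs : ∀ a ∈ s, star a ∈ s)
    {z : Matrix (Fin N) (Fin N) A} (hz : ∀ i j, z i j ∈ s) :
    ∀ i j, ((2⁻¹ : ℂ) • (z + star z)) i j ∈ s := fun i j =>
  SMulMemClass.smul_mem _ (add_mem (hz i j) (star_entries_mem hs hz i j))

section Filtration

variable {ℰ : Type*} [AddCommSemigroup ℰ] [Lattice ℰ] (Φ : CoarseFiltration ℰ A)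

lemma CoarseFiltration.diagOne_entries_mem (E : ℰ) : ∀ i j, diagOne A n N i j ∈ Φ.F E := by
  intro i j
  rw [diagOne, Matrix.diagonal_apply]
  split_ifs
  exacts [Φ.one_mem E, zero_mem _, zero_mem _]

lemma CoarseFiltration.mul_entries_mem {E₁ E₂ : ℰ} {x y : Matrix (Fin N) (Fin N) A}
    (hx : ∀ i j, x i j ∈ Φ.F E₁) (hy : ∀ i j, y i j ∈ Φ.F E₂) :
    ∀ i j, (x * y) i j ∈ Φ.F (E₁ + E₂) := fun i j => by
  rw [Matrix.mul_apply]
  exact sum_mem fun k _ => Φ.mul_mem _ _ _ _ (hx i k) (hy k j)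

lemma CoarseFiltration.conj_diagOne_sub_entries_mem {E : ℰ} {a b : Matrix (Fin N) (Fin N) A}
    (ha : ∀ i j, a i j ∈ Φ.F E) (hb : ∀ i j, b i j ∈ Φ.F E) :
    ∀ i j, (a * diagOne A n N * b - diagOne A n N) i j ∈ Φ.F (E + E + E) := fun i j =>
  sub_mem (Φ.mul_entries_mem (Φ.mul_entries_mem ha (Φ.diagOne_entries_mem E)) hb i j)
    (Φ.diagOne_entries_mem _ i j)

end Filtration

section Subalgebra

variable {B : NonUnitalStarSubalgebra ℂ A}

lemma mul_diagOne_entries_mem {x : Matrix (Fin N) (Fin N) A} (hx : ∀ i j, x i j ∈ B) :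
    ∀ i j, (x * diagOne A n N) i j ∈ B := by
  intro i j
  rw [diagOne, Matrix.mul_diagonal]
  split_ifs
  · rw [mul_one]; exact hx i j
  · rw [mul_zero]; exact zero_mem _

lemma diagOne_mul_entries_mem {x : Matrix (Fin N) (Fin N) A} (hx : ∀ i j, x i j ∈ B) :
    ∀ i j, (diagOne A n N * x) i j ∈ B := by
  intro i j
  rw [diagOne, Matrix.diagonal_mul]
  split_ifs
  · rw [one_mul]; exact hx i j
  · rw [zero_mul]; exact zero_mem _

lemma star_sub_one_entries_mem {w : Matrix (Fin N) (Fin N) A} (hw : ∀ i j, (w - 1) i j ∈ B) :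
    ∀ i j, (star w - 1) i j ∈ B := by
  simpa only [star_sub, star_one] using star_entries_mem (fun _ => star_mem) hw

lemma conj_diagOne_sub_entries_mem {a b : Matrix (Fin N) (Fin N) A}
    (ha : ∀ i j, (a - 1) i j ∈ B) (hb : ∀ i j, (b - 1) i j ∈ B) :
    ∀ i j, (a * diagOne A n N * b - diagOne A n N) i j ∈ B := by
  intro i j
  have : a * diagOne A n N * b - diagOne A n N = (a - 1) * diagOne A n N * (b - 1)
      + (a - 1) * diagOne A n N + diagOne A n N * (b - 1) := by noncomm_ring
  rw [this, Matrix.add_apply, Matrix.add_apply, Matrix.mul_apply]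
  exact add_mem (add_mem (sum_mem fun k _ => mul_mem (mul_diagOne_entries_mem ha i k) (hb k j))
    (mul_diagOne_entries_mem ha i j)) (diagOne_mul_entries_mem hb i j)

end Subalgebra

end Entries

lemma MVPair.exists_selfAdjoint_cia {ℰ : Type*} [AddCommSemigroup ℰ] [Lattice ℰ]
    {A : Type*} [CStarAlgebra A] {Φ : CoarseFiltration ℰ A} {E : ℰ} {c : ℝ}
    (mv : MVPair Φ E c) (E' : ℰ) {δ : ℝ} (hδ : 0 < δ) {N : ℕ} {x y : Matrix (Fin N) (Fin N) A}
    (hx : ∀ i j, x i j ∈ mv.B₁ ∧ x i j ∈ Φ.F E') (hy : ∀ i j, y i j ∈ mv.B₂ ∧ y i j ∈ Φ.F E')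
    (hxs : star x = x) (hys : star y = y) (hxy : matCNorm (x - y) < δ) :
    ∃ z : Matrix (Fin N) (Fin N) A, star z = z ∧
      (∀ i j, z i j ∈ mv.B₁ ∧ z i j ∈ mv.B₂ ∧ z i j ∈ Φ.F E') ∧
      matCNorm (z - x) < c * δ ∧ matCNorm (z - y) < c * δ := by
  obtain ⟨z, hz, hzx, hzy⟩ := mv.cia E' δ hδ N x y hx hy hxy
  refine ⟨(2⁻¹ : ℂ) • (z + star z), ?_, fun i j => ⟨?_, ?_, ?_⟩,
    (matCNorm_half_add_star_sub_le hxs).trans_lt hzx,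
    (matCNorm_half_add_star_sub_le hys).trans_lt hzy⟩
  · simp only [star_smul, star_add, star_star, add_comm (star z)]
    norm_num
  · exact half_add_star_entries_mem (fun _ => star_mem) (fun i j => (hz i j).1) i j
  · exact half_add_star_entries_mem (fun _ => star_mem) (fun i j => (hz i j).2.1) i j
  · exact half_add_star_entries_mem (Φ.star_mem E') (fun i j => (hz i j).2.2) i j

/-- For every `c > 0` there is a control pair `(λ, k)` such that,
given an `E`-controlled Mayer-Vietoris pair with coercivity `c` for a unital filtered
C*-algebra `A`, `E' ∈ ℰ` with `2E' ≤ E`, `0 < ε < 1/(4λ³)`, `ε`-`E'`-unitaries `u`, `v`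
in `M_n(A)`, `M_m(A)` and `ε`-`E'`-unitaries `w₁, w₂` in `M_{n+m}(A)` with
`wᵢ − I ∈ M_{n+m}(A_{Δᵢ})` and `‖diag(u, v) − w₁w₂‖ < ε`, there is a
`λε`-`(k_ε E')`-projection `q` in `M_{n+m}(A)` with `q − diag(I_n, 0)` having entries in
`A_{Δ₁} ∩ A_{Δ₂}`, `‖q − w₁* diag(I_n, 0) w₁‖ < λε` and `‖q − w₂ diag(I_n, 0) w₂*‖ < λε`. -/
theorem stmt_11 (c : ℝ) (hc : 0 < c) :
    ∃ (lam : ℝ) (k : ℝ → ℕ), 1 < lam ∧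
      (∀ ε : ℝ, 0 < ε → ε < 1 / (4 * lam) → 0 < k ε) ∧
      (∀ ε ε' : ℝ, 0 < ε → ε ≤ ε' → ε' < 1 / (4 * lam) → k ε' ≤ k ε) ∧
      ∀ (ℰ : Type u) [AddCommSemigroup ℰ] [Lattice ℰ]
        [CovariantClass ℰ ℰ (· + ·) (· ≤ ·)]
        [CovariantClass ℰ ℰ (Function.swap (· + ·)) (· ≤ ·)]
        (A : Type v) [CStarAlgebra A] (Φ : CoarseFiltration ℰ A) (E : ℰ)
        (mv : MVPair Φ E c) (E' : ℰ), E' + E' ≤ E →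
        ∀ ε : ℝ, 0 < ε → ε < 1 / (4 * lam ^ 3) →
        ∀ n m : ℕ, 0 < n → 0 < m →
        ∀ u : Matrix (Fin n) (Fin n) A, IsQUnitary Φ ε E' u →
        ∀ v : Matrix (Fin m) (Fin m) A, IsQUnitary Φ ε E' v →
        ∀ w₁ w₂ : Matrix (Fin (n + m)) (Fin (n + m)) A,
          IsQUnitary Φ ε E' w₁ → IsQUnitary Φ ε E' w₂ →
          (∀ i j, (w₁ - 1) i j ∈ mv.B₁) →
          (∀ i j, (w₂ - 1) i j ∈ mv.B₂) →
          matCNorm (dsum u v - w₁ * w₂) < ε →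
          ∃ q : Matrix (Fin (n + m)) (Fin (n + m)) A,
            IsQProjection Φ (lam * ε) (posSMul (k ε) E') q ∧
            (∀ i j, (q - diagOne A n (n + m)) i j ∈ mv.B₁ ∧
              (q - diagOne A n (n + m)) i j ∈ mv.B₂) ∧
            matCNorm (q - star w₁ * diagOne A n (n + m) * w₁) < lam * ε ∧
            matCNorm (q - w₂ * diagOne A n (n + m) * star w₂) < lam * ε := by
  -- `q` will be `105cε`-close to both conjugates of `P`, with `‖q² - q‖ ≤ 1050cε + 4ε` and
  -- propagation `3E'`.
  set lam : ℝ := 1060 * c + 1060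
  refine ⟨lam, fun _ => 3, by linarith, fun _ _ _ => Nat.succ_pos 2, fun _ _ _ _ _ => le_rfl, ?_⟩
  intro ℰ _ _ _ _ A _ Φ E mv E' _ ε hε hε_lt n m _ _ u _ v _ w₁ w₂ hw₁ hw₂ hw₁B hw₂B hdw
  have hlamε : lam * ε < 1 / 4 := by
    have := (lt_div_iff₀ (by positivity)).mp hε_lt
    nlinarith [mul_pos hε (mul_pos (by positivity : (0:ℝ) < lam) (by positivity : (0:ℝ) < lam))]
  have hε₁ : ε ≤ 1 := by nlinarith
  obtain ⟨hw₁F, hw₁l, hw₁r⟩ := hw₁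
  obtain ⟨hw₂F, -, hw₂r⟩ := hw₂
  set P := diagOne A n (n + m)
  have hP : IsStarProjection P := diagOne_isStarProjection
  have hxy := matCNorm_star_mul_mul_sub_mul_mul_star_le hε₁ hP (diagOne_commute_dsum u v)
    hw₁l hw₁r hw₂r hdw
  obtain ⟨z, hz_sa, hz, hzx, hzy⟩ := mv.exists_selfAdjoint_cia (E' + E' + E') (δ := 105 * ε)
    (by positivity) (x := star w₁ * P * w₁ - P) (y := w₂ * P * star w₂ - P)
    (fun i j => ⟨conj_diagOne_sub_entries_mem (star_sub_one_entries_mem hw₁B) hw₁B i j,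
      Φ.conj_diagOne_sub_entries_mem (star_entries_mem (Φ.star_mem E') hw₁F) hw₁F i j⟩)
    (fun i j => ⟨conj_diagOne_sub_entries_mem hw₂B (star_sub_one_entries_mem hw₂B) i j,
      Φ.conj_diagOne_sub_entries_mem hw₂F (star_entries_mem (Φ.star_mem E') hw₂F) i j⟩)
    ((hP.isSelfAdjoint.conjugate' w₁).sub hP.isSelfAdjoint).star_eq
    ((hP.isSelfAdjoint.conjugate w₂).sub hP.isSelfAdjoint).star_eq
    (by rw [sub_sub_sub_cancel_right]; linarith)
  rw [sub_sub_eq_add_sub, add_comm z P] at hzx hzy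
  have hq := matCNorm_mul_self_sub_self_le hε₁ (by nlinarith) hP hw₁r.le hzx.le
  refine ⟨P + z, ⟨fun i j => add_mem (Φ.diagOne_entries_mem _ i j) (hz i j).2.2, ?_, by nlinarith⟩,
    fun i j => by simpa only [add_sub_cancel_left] using ⟨(hz i j).1, (hz i j).2.1⟩,
    by nlinarith, by nlinarith⟩
  rw [star_add, hP.isSelfAdjoint.star_eq, hz_sa]
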